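/- Let α : M² → R⁴ be an immersion with everywhere-defined orthogonal asymptotic lines (equivalently, vanishing normal curvature and a normal frame with II_ν = λI for a positive scalar function λ). If α has constant projection with distance of projection r > 0 (i.e., λ ≡ r constant) and the Gaussian curvature K ≠ r² everywhere, then α(M²) lies in a hypersphere of radius 1/r. -/

import Mathlib

noncomputable section
open scoped RealInnerProductSpace

abbrev E4 := EuclideanSpace ℝ (Fin 4)

/-- Partial derivative in the `u` direction. -/
def pdu {V : Type*} [NormedAddCommGroup V] [NormedSpace ℝ V]
    (f : ℝ × ℝ → V) (p : ℝ × ℝ) : V := fderiv ℝ f p (1, 0)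

/-- Partial derivative in the `v` direction. -/
def pdv {V : Type*} [NormedAddCommGroup V] [NormedSpace ℝ V]
    (f : ℝ × ℝ → V) (p : ℝ × ℝ) : V := fderiv ℝ f p (0, 1)

/-- Coefficients of the first fundamental form. -/
def Ec (α : ℝ × ℝ → E4) (p : ℝ × ℝ) : ℝ := ⟪pdu α p, pdu α p⟫
def Fc (α : ℝ × ℝ → E4) (p : ℝ × ℝ) : ℝ := ⟪pdu α p, pdv α p⟫
def Gc (α : ℝ × ℝ → E4) (p : ℝ × ℝ) : ℝ := ⟪pdv α p, pdv α p⟫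

/-- Coefficients of the second fundamental form relative to a normal field `ν`. -/
def ec (α ν : ℝ × ℝ → E4) (p : ℝ × ℝ) : ℝ := ⟪pdu (pdu α) p, ν p⟫
def fc (α ν : ℝ × ℝ → E4) (p : ℝ × ℝ) : ℝ := ⟪pdv (pdu α) p, ν p⟫
def gc (α ν : ℝ × ℝ → E4) (p : ℝ × ℝ) : ℝ := ⟪pdv (pdv α) p, ν p⟫

/-- The first fundamental form evaluated on a tangent direction `(du, dv)`. -/
def Iform (α : ℝ × ℝ → E4) (p : ℝ × ℝ) (du dv : ℝ) : ℝ :=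
  Ec α p * du ^ 2 + 2 * Fc α p * du * dv + Gc α p * dv ^ 2

/-- The second fundamental form relative to `ν` evaluated on `(du, dv)`. -/
def IIform (α ν : ℝ × ℝ → E4) (p : ℝ × ℝ) (du dv : ℝ) : ℝ :=
  ec α ν p * du ^ 2 + 2 * fc α ν p * du * dv + gc α ν p * dv ^ 2

variable {V : Type*} [NormedAddCommGroup V] [NormedSpace ℝ V]

lemma contDiff_pdu {f : ℝ × ℝ → V} (hf : ContDiff ℝ (⊤ : ℕ∞) f) : ContDiff ℝ (⊤ : ℕ∞) (pdu f) :=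
  (hf.fderiv_right (by simp)).clm_apply contDiff_const

lemma contDiff_pdv {f : ℝ × ℝ → V} (hf : ContDiff ℝ (⊤ : ℕ∞) f) : ContDiff ℝ (⊤ : ℕ∞) (pdv f) :=
  (hf.fderiv_right (by simp)).clm_apply contDiff_const

lemma pdu_inner {f g : ℝ × ℝ → E4} (hf : ContDiff ℝ (⊤ : ℕ∞) f) (hg : ContDiff ℝ (⊤ : ℕ∞) g) (p : ℝ × ℝ) :
    pdu (fun q => ⟪f q, g q⟫) p = ⟪pdu f p, g p⟫ + ⟪f p, pdu g p⟫ := by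
  unfold pdu
  rw [fderiv_inner_apply ℝ (hf.differentiable (by simp) p) (hg.differentiable (by simp) p)]
  ring

lemma pdv_inner {f g : ℝ × ℝ → E4} (hf : ContDiff ℝ (⊤ : ℕ∞) f) (hg : ContDiff ℝ (⊤ : ℕ∞) g) (p : ℝ × ℝ) :
    pdv (fun q => ⟪f q, g q⟫) p = ⟪pdv f p, g p⟫ + ⟪f p, pdv g p⟫ := by
  unfold pdv
  rw [fderiv_inner_apply ℝ (hf.differentiable (by simp) p) (hg.differentiable (by simp) p)]
  ring

lemma pdu_const {c : ℝ} (p : ℝ × ℝ) : pdu (fun _ : ℝ × ℝ => c) p = 0 := by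
  simp [pdu]

lemma pdv_const {c : ℝ} (p : ℝ × ℝ) : pdv (fun _ : ℝ × ℝ => c) p = 0 := by
  simp [pdv]

lemma pdv_pdu_symm {f : ℝ × ℝ → V} (hf : ContDiff ℝ (⊤ : ℕ∞) f) (p : ℝ × ℝ) :
    pdv (pdu f) p = pdu (pdv f) p := by
  have hdf : ContDiff ℝ (⊤ : ℕ∞) (fderiv ℝ f) := hf.fderiv_right (by simp)
  have h1 : ∀ w : ℝ × ℝ, fderiv ℝ (fun q => fderiv ℝ f q w) p =
      (fderiv ℝ (fderiv ℝ f) p).flip w := by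
    intro w
    rw [fderiv_clm_apply (hdf.differentiable (by simp) p) (differentiableAt_const w)]
    simp
  have hsymm := second_derivative_symmetric
    (f := f) (f' := fderiv ℝ f) (f'' := fderiv ℝ (fderiv ℝ f) p)
    (fun y => (hf.differentiable (by simp) y).hasFDerivAt)
    ((hdf.differentiable (by simp) p).hasFDerivAt) (1, 0) (0, 1)
  show fderiv ℝ (fun q => fderiv ℝ f q (1,0)) p (0,1)
      = fderiv ℝ (fun q => fderiv ℝ f q (0,1)) p (1,0)
  rw [h1 (1,0), h1 (0,1)]
  simpa using hsymm.symm

lemma key4 (x y n np w : E4)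
    (hEG : 0 < ⟪x,x⟫ * ⟪y,y⟫ - ⟪x,y⟫ ^ 2)
    (hn : ⟪n,n⟫ = 1) (hnp : ⟪np,np⟫ = 1) (hnnp : ⟪n,np⟫ = 0)
    (hnx : ⟪n,x⟫ = 0) (hny : ⟪n,y⟫ = 0) (hnpx : ⟪np,x⟫ = 0) (hnpy : ⟪np,y⟫ = 0)
    (h1 : ⟪x,w⟫ = 0) (h2 : ⟪y,w⟫ = 0) (h3 : ⟪n,w⟫ = 0) (h4 : ⟪np,w⟫ = 0) : w = 0 := by
  set v : Fin 4 → E4 := ![x, y, n, np] with hv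
  have hli : LinearIndependent ℝ v := by
    rw [Fintype.linearIndependent_iff]
    intro g hg
    have hsum : g 0 • x + g 1 • y + g 2 • n + g 3 • np = 0 := by
      have := hg
      simpa [hv, Fin.sum_univ_four, add_assoc] using this
    have inn : ∀ z : E4, g 0 * ⟪x,z⟫ + g 1 * ⟪y,z⟫ + g 2 * ⟪n,z⟫ + g 3 * ⟪np,z⟫ = 0 := by
      intro z
      have : ⟪g 0 • x + g 1 • y + g 2 • n + g 3 • np, z⟫ = (0:ℝ) := by
        rw [hsum]; simp
      simpa [inner_add_left, real_inner_smul_left, Finset.mul_sum, mul_assoc] using this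
    have e3 : g 2 = 0 := by
      have := inn n
      rw [real_inner_comm n x, real_inner_comm n y, real_inner_comm n np] at this
      rw [hnx, hny, hn, hnnp] at this; linarith
    have e4 : g 3 = 0 := by
      have := inn np
      rw [real_inner_comm np x, real_inner_comm np y] at this
      rw [hnpx, hnpy, hnnp, hnp] at this; linarith
    have e1 : g 0 * ⟪x,x⟫ + g 1 * ⟪x,y⟫ = 0 := by
      have := inn x
      rw [real_inner_comm x y] at this
      simpa [hnx, hnpx, e3, e4] using this
    have e2 : g 0 * ⟪x,y⟫ + g 1 * ⟪y,y⟫ = 0 := by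
      have := inn y
      simpa [hny, hnpy, e3, e4] using this
    have g0 : g 0 = 0 := by
      have h : g 0 * (⟪x,x⟫ * ⟪y,y⟫ - ⟪x,y⟫ ^ 2) = 0 := by
        linear_combination ⟪y,y⟫ * e1 - ⟪x,y⟫ * e2
      rcases mul_eq_zero.mp h with h' | h'
      · exact h'
      · exact absurd h' hEG.ne'
    have g1 : g 1 = 0 := by
      have h : g 1 * (⟪x,x⟫ * ⟪y,y⟫ - ⟪x,y⟫ ^ 2) = 0 := by
        linear_combination ⟪x,x⟫ * e2 - ⟪x,y⟫ * e1
      rcases mul_eq_zero.mp h with h' | h'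
      · exact h'
      · exact absurd h' hEG.ne'
    intro i
    fin_cases i <;> simp_all
  have hsp : Submodule.span ℝ (Set.range v) = ⊤ :=
    hli.span_eq_top_of_card_eq_finrank (by simp)
  have hle : Submodule.span ℝ (Set.range v) ≤ (ℝ ∙ w)ᗮ := by
    rw [Submodule.span_le]
    rintro z ⟨i, rfl⟩
    rw [SetLike.mem_coe, Submodule.mem_orthogonal_singleton_iff_inner_left]
    fin_cases i <;> simp [hv]
    · exact h1
    · exact h2
    · exact h3
    · exact h4
  rw [hsp, top_le_iff] at hle
  have hw : w ∈ (ℝ ∙ w)ᗮᗮ :=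
    Submodule.le_orthogonal_orthogonal _ (Submodule.mem_span_singleton_self w)
  rw [hle, Submodule.top_orthogonal_eq_bot] at hw
  simpa using hw

lemma pdu_const_mul {h : ℝ × ℝ → ℝ} (hh : ContDiff ℝ (⊤ : ℕ∞) h) (r : ℝ) (p : ℝ × ℝ) :
    pdu (fun q => r * h q) p = r * pdu h p := by
  unfold pdu
  rw [fderiv_const_mul (hh.differentiable (by simp) p) r]
  simp

lemma pdv_const_mul {h : ℝ × ℝ → ℝ} (hh : ContDiff ℝ (⊤ : ℕ∞) h) (r : ℝ) (p : ℝ × ℝ) :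
    pdv (fun q => r * h q) p = r * pdv h p := by
  unfold pdv
  rw [fderiv_const_mul (hh.differentiable (by simp) p) r]
  simp

lemma pd_inner_const_u {f g : ℝ × ℝ → E4} (hf : ContDiff ℝ (⊤ : ℕ∞) f) (hg : ContDiff ℝ (⊤ : ℕ∞) g)
    {c : ℝ} (h : ∀ p, ⟪f p, g p⟫ = c) (p : ℝ × ℝ) :
    ⟪pdu f p, g p⟫ + ⟪f p, pdu g p⟫ = 0 := by
  have h0 : pdu (fun q => ⟪f q, g q⟫) p = 0 := by
    rw [funext h]; exact pdu_const p
  rw [pdu_inner hf hg p] at h0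
  exact h0

lemma pd_inner_const_v {f g : ℝ × ℝ → E4} (hf : ContDiff ℝ (⊤ : ℕ∞) f) (hg : ContDiff ℝ (⊤ : ℕ∞) g)
    {c : ℝ} (h : ∀ p, ⟪f p, g p⟫ = c) (p : ℝ × ℝ) :
    ⟪pdv f p, g p⟫ + ⟪f p, pdv g p⟫ = 0 := by
  have h0 : pdv (fun q => ⟪f q, g q⟫) p = 0 := by
    rw [funext h]; exact pdv_const p
  rw [pdv_inner hf hg p] at h0
  exact h0

lemma pd_inner_eq_u {f g f' g' : ℝ × ℝ → E4} (hf : ContDiff ℝ (⊤ : ℕ∞) f) (hg : ContDiff ℝ (⊤ : ℕ∞) g)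
    (hf' : ContDiff ℝ (⊤ : ℕ∞) f') (hg' : ContDiff ℝ (⊤ : ℕ∞) g') {r : ℝ}
    (h : ∀ p, ⟪f p, g p⟫ = r * ⟪f' p, g' p⟫) (p : ℝ × ℝ) :
    ⟪pdu f p, g p⟫ + ⟪f p, pdu g p⟫ = r * (⟪pdu f' p, g' p⟫ + ⟪f' p, pdu g' p⟫) := by
  have h0 : pdu (fun q => ⟪f q, g q⟫) p = pdu (fun q => r * ⟪f' q, g' q⟫) p := by
    rw [funext h]
  rw [pdu_inner hf hg p, pdu_const_mul (hf'.inner ℝ hg') r p, pdu_inner hf' hg' p] at h0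
  exact h0

lemma pd_inner_eq_v {f g f' g' : ℝ × ℝ → E4} (hf : ContDiff ℝ (⊤ : ℕ∞) f) (hg : ContDiff ℝ (⊤ : ℕ∞) g)
    (hf' : ContDiff ℝ (⊤ : ℕ∞) f') (hg' : ContDiff ℝ (⊤ : ℕ∞) g') {r : ℝ}
    (h : ∀ p, ⟪f p, g p⟫ = r * ⟪f' p, g' p⟫) (p : ℝ × ℝ) :
    ⟪pdv f p, g p⟫ + ⟪f p, pdv g p⟫ = r * (⟪pdv f' p, g' p⟫ + ⟪f' p, pdv g' p⟫) := by
  have h0 : pdv (fun q => ⟪f q, g q⟫) p = pdv (fun q => r * ⟪f' q, g' q⟫) p := by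
    rw [funext h]
  rw [pdv_inner hf hg p, pdv_const_mul (hf'.inner ℝ hg') r p, pdv_inner hf' hg' p] at h0
  exact h0


/-- Theorem 3.2 of the paper: let `α` be an immersion with everywhere
defined orthogonal asymptotic lines, i.e. with a unit normal field `ν` such that
`II_ν = r I`. If `α` has constant projection with distance of projection `r > 0` (so
`r` is constant) and the Gaussian curvature `K ≠ r²` everywhere, then `α(M²)` lies in a
hypersphere of radius `1/r`. -/
theorem stmt16 (r : ℝ) (hr : 0 < r) (α ν νperp : ℝ × ℝ → E4)
    (hα : ContDiff ℝ (⊤ : ℕ∞) α) (hν : ContDiff ℝ (⊤ : ℕ∞) ν) (hνperp : ContDiff ℝ (⊤ : ℕ∞) νperp)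
    -- immersion: positive definite first fundamental form
    (hEG : ∀ p, 0 < Ec α p * Gc α p - Fc α p ^ 2) (hE : ∀ p, 0 < Ec α p)
    -- `{νperp, ν}` is an orthonormal normal frame
    (hνunit : ∀ p, ⟪ν p, ν p⟫ = 1) (hνperpunit : ∀ p, ⟪νperp p, νperp p⟫ = 1)
    (hνν : ∀ p, ⟪ν p, νperp p⟫ = 0)
    (hνu : ∀ p, ⟪ν p, pdu α p⟫ = 0) (hνv : ∀ p, ⟪ν p, pdv α p⟫ = 0)
    (hνpu : ∀ p, ⟪νperp p, pdu α p⟫ = 0) (hνpv : ∀ p, ⟪νperp p, pdv α p⟫ = 0)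
    -- constant projection with distance of projection `r`: `II_ν = r I`
    (hIIe : ∀ p, ec α ν p = r * Ec α p)
    (hIIf : ∀ p, fc α ν p = r * Fc α p)
    (hIIg : ∀ p, gc α ν p = r * Gc α p)
    -- the Gaussian curvature is nowhere equal to `r²`
    (hK : ∀ p, (ec α νperp p * gc α νperp p - (fc α νperp p) ^ 2 +
        ec α ν p * gc α ν p - (fc α ν p) ^ 2) /
        (Ec α p * Gc α p - Fc α p ^ 2) ≠ r ^ 2) :
    ∃ c : E4, ∀ p, ‖α p - c‖ = 1 / r := by
  have hαu : ContDiff ℝ (⊤ : ℕ∞) (pdu α) := contDiff_pdu hα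
  have hαv : ContDiff ℝ (⊤ : ℕ∞) (pdv α) := contDiff_pdv hα
  have hαuu : ContDiff ℝ (⊤ : ℕ∞) (pdu (pdu α)) := contDiff_pdu hαu
  have hαuv : ContDiff ℝ (⊤ : ℕ∞) (pdv (pdu α)) := contDiff_pdv hαu
  have hαvv : ContDiff ℝ (⊤ : ℕ∞) (pdv (pdv α)) := contDiff_pdv hαv
  have symm1 : ∀ p, pdv (pdu α) p = pdu (pdv α) p := pdv_pdu_symm hα
  have symm2 : ∀ p, pdv (pdu (pdu α)) p = pdu (pdv (pdu α)) p := pdv_pdu_symm hαu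
  have symm3 : ∀ p, pdu (pdv (pdv α)) p = pdv (pdv (pdu α)) p := by
    intro p
    have h1 : pdu (pdv (pdv α)) p = pdv (pdu (pdv α)) p := (pdv_pdu_symm hαv p).symm
    have h2 : pdu (pdv α) = pdv (pdu α) := funext fun q => (symm1 q).symm
    rw [h1, h2]
  have hIIe' : ∀ p, ⟪pdu (pdu α) p, ν p⟫ = r * ⟪pdu α p, pdu α p⟫ := by
    intro p; have := hIIe p; simpa [ec, Ec] using this
  have hIIf' : ∀ p, ⟪pdv (pdu α) p, ν p⟫ = r * ⟪pdu α p, pdv α p⟫ := by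
    intro p; have := hIIf p; simpa [fc, Fc] using this
  have hIIg' : ∀ p, ⟪pdv (pdv α) p, ν p⟫ = r * ⟪pdv α p, pdv α p⟫ := by
    intro p; have := hIIg p; simpa [gc, Gc] using this
  set aP : ℝ × ℝ → ℝ := fun p => ⟪pdu ν p, νperp p⟫ with haP
  set bP : ℝ × ℝ → ℝ := fun p => ⟪pdv ν p, νperp p⟫ with hbP
  have dnn_u : ∀ p, ⟪pdu ν p, ν p⟫ = 0 := by
    intro p
    have h := pd_inner_const_u hν hν hνunit p
    have hc := real_inner_comm (ν p) (pdu ν p)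
    linarith
  have dnn_v : ∀ p, ⟪pdv ν p, ν p⟫ = 0 := by
    intro p
    have h := pd_inner_const_v hν hν hνunit p
    have hc := real_inner_comm (ν p) (pdv ν p)
    linarith
  have dnau : ∀ p, ⟪pdu ν p, pdu α p⟫ = -(r * ⟪pdu α p, pdu α p⟫) := by
    intro p
    have h := pd_inner_const_u hν hαu hνu p
    have h2 : ⟪ν p, pdu (pdu α) p⟫ = r * ⟪pdu α p, pdu α p⟫ := by
      rw [real_inner_comm]; exact hIIe' p
    linarith
  have dnav : ∀ p, ⟪pdu ν p, pdv α p⟫ = -(r * ⟪pdu α p, pdv α p⟫) := by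
    intro p
    have h := pd_inner_const_u hν hαv hνv p
    have h2 : ⟪ν p, pdu (pdv α) p⟫ = r * ⟪pdu α p, pdv α p⟫ := by
      rw [← symm1 p, real_inner_comm]; exact hIIf' p
    linarith
  have dvau : ∀ p, ⟪pdv ν p, pdu α p⟫ = -(r * ⟪pdu α p, pdv α p⟫) := by
    intro p
    have h := pd_inner_const_v hν hαu hνu p
    have h2 : ⟪ν p, pdv (pdu α) p⟫ = r * ⟪pdu α p, pdv α p⟫ := by
      rw [real_inner_comm]; exact hIIf' p
    linarith
  have dvav : ∀ p, ⟪pdv ν p, pdv α p⟫ = -(r * ⟪pdv α p, pdv α p⟫) := by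
    intro p
    have h := pd_inner_const_v hν hαv hνv p
    have h2 : ⟪ν p, pdv (pdv α) p⟫ = r * ⟪pdv α p, pdv α p⟫ := by
      rw [real_inner_comm]; exact hIIg' p
    linarith
  -- vector identities for the derivatives of ν
  have V1 : ∀ p, pdu ν p = -(r • pdu α p) + aP p • νperp p := by
    intro p
    rw [← sub_eq_zero]
    apply key4 (pdu α p) (pdv α p) (ν p) (νperp p) _
      (by simpa [Ec, Fc, Gc] using hEG p) (hνunit p) (hνperpunit p) (hνν p)
      (hνu p) (hνv p) (hνpu p) (hνpv p)
    · have k1 : ⟪pdu α p, pdu ν p⟫ = -(r * ⟪pdu α p, pdu α p⟫) := by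
        rw [real_inner_comm]; exact dnau p
      have k2 : ⟪pdu α p, νperp p⟫ = 0 := by rw [real_inner_comm]; exact hνpu p
      simp only [inner_sub_right, inner_add_right, inner_neg_right, real_inner_smul_right]
      rw [k1, k2]; ring
    · have k1 : ⟪pdv α p, pdu ν p⟫ = -(r * ⟪pdu α p, pdv α p⟫) := by
        rw [real_inner_comm]; exact dnav p
      have k2 : ⟪pdv α p, νperp p⟫ = 0 := by rw [real_inner_comm]; exact hνpv p
      have k3 : ⟪pdv α p, pdu α p⟫ = ⟪pdu α p, pdv α p⟫ := real_inner_comm _ _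
      simp only [inner_sub_right, inner_add_right, inner_neg_right, real_inner_smul_right]
      rw [k1, k2, k3]; ring
    · have k1 : ⟪ν p, pdu ν p⟫ = 0 := by rw [real_inner_comm]; exact dnn_u p
      simp only [inner_sub_right, inner_add_right, inner_neg_right, real_inner_smul_right]
      rw [k1, hνu p, hνν p]; ring
    · have k1 : ⟪νperp p, pdu ν p⟫ = aP p := by rw [real_inner_comm]
      simp only [inner_sub_right, inner_add_right, inner_neg_right, real_inner_smul_right]
      rw [k1, hνpu p, hνperpunit p]; ring
  have V2 : ∀ p, pdv ν p = -(r • pdv α p) + bP p • νperp p := by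
    intro p
    rw [← sub_eq_zero]
    apply key4 (pdu α p) (pdv α p) (ν p) (νperp p) _
      (by simpa [Ec, Fc, Gc] using hEG p) (hνunit p) (hνperpunit p) (hνν p)
      (hνu p) (hνv p) (hνpu p) (hνpv p)
    · have k1 : ⟪pdu α p, pdv ν p⟫ = -(r * ⟪pdu α p, pdv α p⟫) := by
        rw [real_inner_comm]; exact dvau p
      have k2 : ⟪pdu α p, νperp p⟫ = 0 := by rw [real_inner_comm]; exact hνpu p
      simp only [inner_sub_right, inner_add_right, inner_neg_right, real_inner_smul_right]
      rw [k1, k2]; ring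
    · have k1 : ⟪pdv α p, pdv ν p⟫ = -(r * ⟪pdv α p, pdv α p⟫) := by
        rw [real_inner_comm]; exact dvav p
      have k2 : ⟪pdv α p, νperp p⟫ = 0 := by rw [real_inner_comm]; exact hνpv p
      simp only [inner_sub_right, inner_add_right, inner_neg_right, real_inner_smul_right]
      rw [k1, k2]; ring
    · have k1 : ⟪ν p, pdv ν p⟫ = 0 := by rw [real_inner_comm]; exact dnn_v p
      simp only [inner_sub_right, inner_add_right, inner_neg_right, real_inner_smul_right]
      rw [k1, hνv p, hνν p]; ring
    · have k1 : ⟪νperp p, pdv ν p⟫ = bP p := by rw [real_inner_comm]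
      simp only [inner_sub_right, inner_add_right, inner_neg_right, real_inner_smul_right]
      rw [k1, hνpv p, hνperpunit p]; ring
  -- the normal curvature vanishes: aP = bP = 0 via Codazzi
  have hK' : ∀ p, ⟪pdu (pdu α) p, νperp p⟫ * ⟪pdv (pdv α) p, νperp p⟫ -
      ⟪pdv (pdu α) p, νperp p⟫ ^ 2 ≠ 0 := by
    intro p hD
    apply hK p
    have hΔ : Ec α p * Gc α p - Fc α p ^ 2 ≠ 0 := (hEG p).ne'
    rw [hIIe p, hIIf p, hIIg p, div_eq_iff hΔ]
    have hD' : ec α νperp p * gc α νperp p - fc α νperp p ^ 2 = 0 := by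
      simpa [ec, fc, gc] using hD
    linear_combination hD'
  have ab0 : ∀ p, aP p = 0 ∧ bP p = 0 := by
    intro p
    have Cod1 := pd_inner_eq_v hαuu hν hαu hαu hIIe' p
    have Cod2 := pd_inner_eq_u hαuv hν hαu hαv hIIf' p
    have Cod3 := pd_inner_eq_v hαuv hν hαu hαv hIIf' p
    have Cod4 := pd_inner_eq_u hαvv hν hαv hαv hIIg' p
    have S1 : ⟪pdu (pdu α) p, pdv ν p⟫ =
        -(r * ⟪pdu (pdu α) p, pdv α p⟫) + bP p * ⟪pdu (pdu α) p, νperp p⟫ := by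
      rw [V2 p]
      simp only [inner_add_right, inner_neg_right, real_inner_smul_right]
    have S2 : ⟪pdv (pdu α) p, pdu ν p⟫ =
        -(r * ⟪pdv (pdu α) p, pdu α p⟫) + aP p * ⟪pdv (pdu α) p, νperp p⟫ := by
      rw [V1 p]
      simp only [inner_add_right, inner_neg_right, real_inner_smul_right]
    have S3 : ⟪pdv (pdu α) p, pdv ν p⟫ =
        -(r * ⟪pdv (pdu α) p, pdv α p⟫) + bP p * ⟪pdv (pdu α) p, νperp p⟫ := by
      rw [V2 p]
      simp only [inner_add_right, inner_neg_right, real_inner_smul_right]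
    have S4 : ⟪pdv (pdv α) p, pdu ν p⟫ =
        -(r * ⟪pdv (pdv α) p, pdu α p⟫) + aP p * ⟪pdv (pdv α) p, νperp p⟫ := by
      rw [V1 p]
      simp only [inner_add_right, inner_neg_right, real_inner_smul_right]
    have T1 : ⟪pdv (pdu (pdu α)) p, ν p⟫ = ⟪pdu (pdv (pdu α)) p, ν p⟫ := by
      rw [symm2 p]
    have U1c : ⟪pdu α p, pdu (pdv α) p⟫ = ⟪pdu α p, pdv (pdu α) p⟫ := by
      rw [symm1 p]
    have Eq1 : bP p * ⟪pdu (pdu α) p, νperp p⟫ - aP p * ⟪pdv (pdu α) p, νperp p⟫ = 0 := by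
      linear_combination Cod1 - Cod2 - S1 + S2 - T1 - r * U1c
    have T2 : ⟪pdu (pdv (pdv α)) p, ν p⟫ = ⟪pdv (pdv (pdu α)) p, ν p⟫ := by
      rw [symm3 p]
    have U2c : ⟪pdu (pdv α) p, pdv α p⟫ = ⟪pdv (pdu α) p, pdv α p⟫ := by
      rw [symm1 p]
    have U3c : ⟪pdv α p, pdu (pdv α) p⟫ = ⟪pdv α p, pdv (pdu α) p⟫ := by
      rw [symm1 p]
    have C3 : ⟪pdv α p, pdv (pdu α) p⟫ = ⟪pdv (pdu α) p, pdv α p⟫ := real_inner_comm _ _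
    have C2 : ⟪pdu α p, pdv (pdv α) p⟫ = ⟪pdv (pdv α) p, pdu α p⟫ := real_inner_comm _ _
    have Eq2 : bP p * ⟪pdv (pdu α) p, νperp p⟫ - aP p * ⟪pdv (pdv α) p, νperp p⟫ = 0 := by
      linear_combination Cod3 - Cod4 - S3 + S4 + T2 - r * U2c - r * U3c - r * C3 + r * C2
    constructor
    · have h : aP p * (⟪pdu (pdu α) p, νperp p⟫ * ⟪pdv (pdv α) p, νperp p⟫ -
          ⟪pdv (pdu α) p, νperp p⟫ ^ 2) = 0 := by
        linear_combination ⟪pdv (pdu α) p, νperp p⟫ * Eq1 - ⟪pdu (pdu α) p, νperp p⟫ * Eq2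
      exact (mul_eq_zero.mp h).resolve_right (hK' p)
    · have h : bP p * (⟪pdu (pdu α) p, νperp p⟫ * ⟪pdv (pdv α) p, νperp p⟫ -
          ⟪pdv (pdu α) p, νperp p⟫ ^ 2) = 0 := by
        linear_combination ⟪pdv (pdv α) p, νperp p⟫ * Eq1 - ⟪pdv (pdu α) p, νperp p⟫ * Eq2
      exact (mul_eq_zero.mp h).resolve_right (hK' p)
  have V1' : ∀ p, pdu ν p = -(r • pdu α p) := by
    intro p; have := V1 p; rw [(ab0 p).1] at this; simpa using this
  have V2' : ∀ p, pdv ν p = -(r • pdv α p) := by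
    intro p; have := V2 p; rw [(ab0 p).2] at this; simpa using this
  -- ν + r • α is constant
  have hdiff : Differentiable ℝ (fun p => ν p + r • α p) :=
    (hν.differentiable (by simp)).add ((hα.differentiable (by simp)).const_smul r)
  have hzero : ∀ p, fderiv ℝ (fun p => ν p + r • α p) p = 0 := by
    intro p
    have hd1 : DifferentiableAt ℝ ν p := hν.differentiable (by simp) p
    have hd2 : DifferentiableAt ℝ (fun q => r • α q) p :=
      (hα.differentiable (by simp) p).const_smul r
    refine ContinuousLinearMap.ext fun w => ?_
    rw [fderiv_fun_add hd1 hd2, fderiv_fun_const_smul (hα.differentiable (by simp) p) r]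
    have hw : w = w.1 • ((1:ℝ), (0:ℝ)) + w.2 • ((0:ℝ), (1:ℝ)) := by
      ext <;> simp
    simp only [ContinuousLinearMap.add_apply, ContinuousLinearMap.coe_smul',
      Pi.smul_apply, ContinuousLinearMap.zero_apply]
    rw [hw, map_add, map_smul, map_smul, map_add, map_smul, map_smul]
    have e1 : fderiv ℝ ν p ((1:ℝ), (0:ℝ)) = -(r • pdu α p) := V1' p
    have e2 : fderiv ℝ ν p ((0:ℝ), (1:ℝ)) = -(r • pdv α p) := V2' p
    rw [e1, e2]
    show w.1 • -(r • pdu α p) + w.2 • -(r • pdv α p) +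
        r • (w.1 • fderiv ℝ α p (1, 0) + w.2 • fderiv ℝ α p (0, 1)) = 0
    show w.1 • -(r • pdu α p) + w.2 • -(r • pdv α p) +
        r • (w.1 • pdu α p + w.2 • pdv α p) = 0
    module
  have hconst : ∀ p q : ℝ × ℝ, ν p + r • α p = ν q + r • α q :=
    fun p q => is_const_of_fderiv_eq_zero hdiff hzero p q
  refine ⟨α (0, 0) + r⁻¹ • ν (0, 0), fun p => ?_⟩
  have h := hconst p (0, 0)
  have key : r • (α p - (α (0, 0) + r⁻¹ • ν (0, 0))) = -ν p := by
    have hra : r • α p = ν (0, 0) + r • α (0, 0) - ν p := by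
      rw [← h]; abel
    rw [smul_sub, smul_add, smul_smul, mul_inv_cancel₀ hr.ne', one_smul, hra]
    abel
  have hn1 : ‖ν p‖ = 1 := by
    have h2 := hνunit p
    rw [real_inner_self_eq_norm_mul_norm] at h2
    nlinarith [norm_nonneg (ν p)]
  have h3 := congrArg norm key
  rw [norm_smul, norm_neg, hn1, Real.norm_eq_abs, abs_of_pos hr] at h3
  field_simp at h3 ⊢
  linarith
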